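/- arXiv:0912.4444 — 2 statements merged into one kernel-verified Lean document; each statement's English description precedes it below -/
import Mathlib

section
/- Under the same hypotheses, u(x,λ) J u(x, λ̄)* = j for all x ∈ [0,T] and λ ∈ ℂ. -/
/-! With `V = [[0, v], [v*, 0]]` the system reads `u' = A u` for `A = i j (λ + V)`, as `j² = 1`.
Hence `F(x) = u(x,λ) J u(x,λ̄)*` satisfies the linear Sylvester equation `F' = A F + F B` with
`B = A(λ̄)* = -i (λ + V) j`, since `j` and `V` are Hermitian.
The constant `j` solves the same equation, as `A j + j B = 0`, and `F(0) = Q* J Q = j`;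
Grönwall's inequality applied to `F - j` gives `F ≡ j`. -/

open Set Matrix

attribute [local instance] Matrix.normedAddCommGroup Matrix.normedSpace

theorem Matrix.norm_mul_le_card_mul {m n p 𝕜 : Type*} [Fintype m] [Fintype n] [Fintype p]
    [NormedRing 𝕜] (M : Matrix m n 𝕜) (N : Matrix n p 𝕜) :
    ‖M * N‖ ≤ Fintype.card n * ‖M‖ * ‖N‖ := by
  rw [norm_le_iff (by positivity)]
  intro i j
  calc ‖∑ k, M i k * N k j‖ ≤ ∑ k, ‖M i k‖ * ‖N k j‖ :=
        norm_sum_le_of_le _ fun k _ => norm_mul_le _ _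
    _ ≤ ∑ _k : n, ‖M‖ * ‖N‖ := Finset.sum_le_sum fun k _ =>
        mul_le_mul (norm_entry_le_entrywise_sup_norm M) (norm_entry_le_entrywise_sup_norm N)
          (norm_nonneg _) (norm_nonneg _)
    _ = Fintype.card n * ‖M‖ * ‖N‖ := by simp [mul_assoc]

section Derivatives

variable {m n p 𝕜 : Type*} [RCLike 𝕜] {s : Set ℝ} {x : ℝ}

theorem Matrix.hasDerivWithinAt_iff [Fintype m] [Fintype n] {f : ℝ → Matrix m n 𝕜}
    {f' : Matrix m n 𝕜} :
    HasDerivWithinAt f f' s x ↔ ∀ i j, HasDerivWithinAt (fun t => f t i j) (f' i j) s x :=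
  hasDerivWithinAt_pi.trans (forall_congr' fun _ => hasDerivWithinAt_pi)

theorem HasDerivWithinAt.matrix_mul [Fintype m] [Fintype n] [Fintype p]
    {f : ℝ → Matrix m n 𝕜} {g : ℝ → Matrix n p 𝕜} {f' g'}
    (hf : HasDerivWithinAt f f' s x) (hg : HasDerivWithinAt g g' s x) :
    HasDerivWithinAt (fun t => f t * g t) (f' * g x + f x * g') s x := by
  rw [Matrix.hasDerivWithinAt_iff] at *
  intro i j
  simp only [mul_apply, Matrix.add_apply, ← Finset.sum_add_distrib]
  exact HasDerivWithinAt.fun_sum fun k _ => ((hf i k).mul (hg k j)).congr_deriv (by ring)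

theorem HasDerivWithinAt.matrix_conjTranspose [Fintype m] [Fintype n]
    {f : ℝ → Matrix m n 𝕜} {f'}
    (hf : HasDerivWithinAt f f' s x) : HasDerivWithinAt (fun t => (f t)ᴴ) f'ᴴ s x := by
  rw [Matrix.hasDerivWithinAt_iff] at *
  exact fun i j => (hf j i).star

theorem HasDerivWithinAt.mul_const_mul_conjTranspose [Fintype m] [Fintype n] [Fintype p]
    {U : ℝ → Matrix m n 𝕜} {W : ℝ → Matrix p n 𝕜} {A : Matrix m m 𝕜} {B : Matrix p p 𝕜}
    (M : Matrix n n 𝕜)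
    (hU : HasDerivWithinAt U (A * U x) s x) (hW : HasDerivWithinAt W (B * W x) s x) :
    HasDerivWithinAt (fun t => U t * M * (W t)ᴴ)
      (A * (U x * M * (W x)ᴴ) + U x * M * (W x)ᴴ * Bᴴ) s x :=
  ((hU.matrix_mul (hasDerivWithinAt_const x s M)).matrix_mul hW.matrix_conjTranspose).congr_deriv
    (by simp only [conjTranspose_mul, Matrix.mul_zero, add_zero, Matrix.mul_assoc])

theorem eqOn_const_of_hasDerivWithinAt_sylvester [Fintype m] [Fintype n] {a b : ℝ}
    {A : ℝ → Matrix m m 𝕜} {B : ℝ → Matrix n n 𝕜} {F : ℝ → Matrix m n 𝕜} {c : Matrix m n 𝕜}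
    (hA : ContinuousOn A (Icc a b)) (hB : ContinuousOn B (Icc a b))
    (hF : ∀ x ∈ Icc a b, HasDerivWithinAt F (A x * F x + F x * B x) (Icc a b) x)
    (hc : ∀ x ∈ Icc a b, A x * c + c * B x = 0) (ha : F a = c) :
    EqOn F (fun _ => c) (Icc a b) := by
  obtain ⟨KA, hKA⟩ := isCompact_Icc.exists_bound_of_continuousOn hA
  obtain ⟨KB, hKB⟩ := isCompact_Icc.exists_bound_of_continuousOn hB
  have hderiv : ∀ x ∈ Icc a b,
      HasDerivWithinAt (fun t => F t - c) (A x * (F x - c) + (F x - c) * B x) (Icc a b) x :=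
    fun x hx => ((hF x hx).sub_const c).congr_deriv (by
      rw [Matrix.mul_sub, Matrix.sub_mul, ← sub_eq_zero, ← hc x hx]; abel)
  have hbound : ∀ x ∈ Ico a b, ‖A x * (F x - c) + (F x - c) * B x‖
      ≤ (Fintype.card m * KA + Fintype.card n * KB) * ‖F x - c‖ := fun x hx => by
    have hx' := Ico_subset_Icc_self hx
    calc _ ≤ ‖A x * (F x - c)‖ + ‖(F x - c) * B x‖ := norm_add_le _ _
      _ ≤ Fintype.card m * ‖A x‖ * ‖F x - c‖ + Fintype.card n * ‖F x - c‖ * ‖B x‖ :=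
          add_le_add (norm_mul_le_card_mul _ _) (norm_mul_le_card_mul _ _)
      _ ≤ Fintype.card m * KA * ‖F x - c‖ + Fintype.card n * ‖F x - c‖ * KB := by
          gcongr
          exacts [hKA x hx', hKB x hx']
      _ = _ := by ring
  intro x hx
  refine sub_eq_zero.mp (eq_zero_of_abs_deriv_le_mul_abs_self_of_eq_zero_right
    (fun y hy => (hderiv y hy).continuousWithinAt) (fun y hy => ?_) (sub_eq_zero.mpr ha)
    hbound x hx)
  exact (hderiv y (Ico_subset_Icc_self hy)).mono_of_mem_nhdsWithin
    (Filter.mem_of_superset (Icc_mem_nhdsGE_of_mem ⟨le_rfl, hy.2⟩) (Icc_subset_Icc hy.1 le_rfl))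

end Derivatives

section Dirac

open Complex

variable {ι : Type*} [Fintype ι] [DecidableEq ι]

theorem dirac_deriv_eq {j M U U' : Matrix ι ι ℂ} (hjj : j * j = 1)
    (h : (-I) • (j * U') = M * U) : U' = (I • (j * M)) * U := by
  have hjU' : j * U' = I • (M * U) := by
    rw [← h, smul_smul, mul_neg, I_mul_I, neg_neg, one_smul]
  rw [← Matrix.one_mul U', ← hjj, Matrix.mul_assoc, hjU', Matrix.mul_smul, Matrix.smul_mul,
    Matrix.mul_assoc]

theorem dirac_sylvester_eq_zero {j H : Matrix ι ι ℂ} (hjH : jᴴ = j) (hH : Hᴴ = H) (μ : ℂ) :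
    (I • (j * (μ • 1 + H))) * j + j * (I • (j * (starRingEnd ℂ μ • 1 + H)))ᴴ = 0 := by
  simp only [conjTranspose_smul, conjTranspose_mul, conjTranspose_add, conjTranspose_one, hjH, hH]
  rw [Complex.star_def, conj_I, conj_conj, Matrix.smul_mul, Matrix.mul_smul,
    ← Matrix.mul_assoc, neg_smul, add_neg_cancel]

theorem fromBlocks_QH_mul_J_mul_Q {n : Type*} [Fintype n] [DecidableEq n] :
    (((Real.sqrt 2 : ℂ))⁻¹ • (fromBlocks 1 (-1) 1 1 : Matrix (n ⊕ n) (n ⊕ n) ℂ))ᴴ *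
      fromBlocks (0 : Matrix n n ℂ) 1 1 0 *
      (((Real.sqrt 2 : ℂ))⁻¹ • (fromBlocks 1 (-1) 1 1 : Matrix (n ⊕ n) (n ⊕ n) ℂ)) =
        fromBlocks 1 0 0 (-1) := by
  have hblocks : (fromBlocks 1 (-1) 1 1 : Matrix (n ⊕ n) (n ⊕ n) ℂ)ᴴ * fromBlocks 0 1 1 0 *
      fromBlocks 1 (-1) 1 1 = (2 : ℂ) • fromBlocks 1 0 0 (-1) := by
    simp [fromBlocks_conjTranspose, fromBlocks_multiply, two_smul, fromBlocks_add]
  have hsqrt : star ((Real.sqrt 2 : ℂ))⁻¹ * ((Real.sqrt 2 : ℂ))⁻¹ * 2 = 1 := by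
    rw [star_inv₀, Complex.star_def, conj_ofReal, ← mul_inv, ← ofReal_mul,
      Real.mul_self_sqrt zero_le_two, ofReal_ofNat, inv_mul_cancel₀ two_ne_zero]
  rw [conjTranspose_smul, Matrix.smul_mul, Matrix.smul_mul, Matrix.mul_smul, smul_smul, hblocks,
    smul_smul, hsqrt, one_smul]

end Dirac

theorem stmt_3_general {r : ℕ} {T : ℝ}
    (v : ℝ → Matrix (Fin r) (Fin r) ℂ) (hv : ContinuousOn v (Icc 0 T))
    (jm Jm Q : Matrix (Fin r ⊕ Fin r) (Fin r ⊕ Fin r) ℂ)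
    (hj : jm = Matrix.fromBlocks (1 : Matrix (Fin r) (Fin r) ℂ) 0 0 (-1))
    (hJ : Jm = Matrix.fromBlocks (0 : Matrix (Fin r) (Fin r) ℂ) 1 1 0)
    (hQ : Q = ((Real.sqrt 2 : ℂ))⁻¹ • Matrix.fromBlocks 1 (-1) 1 1)
    (u u' : ℂ → ℝ → Matrix (Fin r ⊕ Fin r) (Fin r ⊕ Fin r) ℂ)
    (hder : ∀ lam : ℂ, ∀ x ∈ Icc (0:ℝ) T, HasDerivWithinAt (u lam) (u' lam x) (Icc 0 T) x)
    (heq : ∀ lam : ℂ, ∀ x ∈ Icc (0:ℝ) T,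
      (-Complex.I) • (jm * u' lam x)
        = lam • u lam x + Matrix.fromBlocks 0 (v x) (v x)ᴴ 0 * u lam x)
    (hinit : ∀ lam : ℂ, u lam 0 = Qᴴ) :
    ∀ lam : ℂ, ∀ x ∈ Icc (0:ℝ) T,
      u lam x * Jm * (u (starRingEnd ℂ lam) x)ᴴ = jm := by
  set A : ℂ → ℝ → Matrix (Fin r ⊕ Fin r) (Fin r ⊕ Fin r) ℂ :=
    fun μ x => Complex.I • (jm * (μ • 1 + fromBlocks 0 (v x) (v x)ᴴ 0))
  have hjj : jm * jm = 1 := by simp [hj, fromBlocks_multiply, ← fromBlocks_one]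
  have hjH : jmᴴ = jm := by simp [hj, fromBlocks_conjTranspose]
  have hu : ∀ μ, ∀ x ∈ Icc 0 T, HasDerivWithinAt (u μ) (A μ x * u μ x) (Icc 0 T) x :=
    fun μ x hx => dirac_deriv_eq (M := μ • 1 + fromBlocks 0 (v x) (v x)ᴴ 0) hjj
      (by rw [heq μ x hx, Matrix.add_mul, smul_one_mul]) ▸ hder μ x hx
  have hA : ∀ μ, ContinuousOn (A μ) (Icc 0 T) := fun μ =>
    (by fun_prop : Continuous fun M : Matrix (Fin r) (Fin r) ℂ =>
      Complex.I • (jm * (μ • 1 + fromBlocks 0 M Mᴴ 0))).comp_continuousOn hv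
  intro lam
  refine eqOn_const_of_hasDerivWithinAt_sylvester (hA lam)
    (continuous_id.matrix_conjTranspose.comp_continuousOn (hA (starRingEnd ℂ lam)))
    (fun x hx => (hu lam x hx).mul_const_mul_conjTranspose Jm (hu _ x hx))
    (fun x _ => dirac_sylvester_eq_zero hjH (by simp [fromBlocks_conjTranspose]) lam) ?_
  rw [hinit, hinit, conjTranspose_conjTranspose, hQ, hJ, hj, fromBlocks_QH_mul_J_mul_Q]

theorem stmt_3 {r : ℕ} (hr : 0 < r) {T : ℝ} (hT : 0 < T)
    (v : ℝ → Matrix (Fin r) (Fin r) ℂ) (hv : ContinuousOn v (Icc 0 T))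
    (jm Jm Q : Matrix (Fin r ⊕ Fin r) (Fin r ⊕ Fin r) ℂ)
    (hj : jm = Matrix.fromBlocks (1 : Matrix (Fin r) (Fin r) ℂ) 0 0 (-1))
    (hJ : Jm = Matrix.fromBlocks (0 : Matrix (Fin r) (Fin r) ℂ) 1 1 0)
    (hQ : Q = ((Real.sqrt 2 : ℂ))⁻¹ • Matrix.fromBlocks 1 (-1) 1 1)
    (u u' : ℂ → ℝ → Matrix (Fin r ⊕ Fin r) (Fin r ⊕ Fin r) ℂ)
    (hder : ∀ lam : ℂ, ∀ x ∈ Icc (0:ℝ) T, HasDerivWithinAt (u lam) (u' lam x) (Icc 0 T) x)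
    (hcont : ∀ lam : ℂ, ContinuousOn (u' lam) (Icc 0 T))
    (heq : ∀ lam : ℂ, ∀ x ∈ Icc (0:ℝ) T,
      (-Complex.I) • (jm * u' lam x)
        = lam • u lam x + Matrix.fromBlocks 0 (v x) (v x)ᴴ 0 * u lam x)
    (hinit : ∀ lam : ℂ, u lam 0 = Qᴴ) :
    ∀ lam : ℂ, ∀ x ∈ Icc (0:ℝ) T,
      u lam x * Jm * (u (starRingEnd ℂ lam) x)ᴴ = jm :=
  stmt_3_general v hv jm Jm Q hj hJ hQ u u' hder heq hinit
end

section
/- With θ and ω the top and bottom r×2r blocks of u(x, 0), we have ω′(x) J θ(x)* = −i v(x)* for all x ∈ [0,T]. -/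
/-! The system `j u' = i B u` with `B = [[0, v], [v*, 0]]` Hermitian makes `u* j u` constant, and
at `x = 0` it equals `Q j Q* = J`. Since `j² = J² = 1`, this forces `u J u* = j`, whose upper-left
block reads `θ J θ* = I`. The lower block row of the system gives `ω' = -i v* θ`, hence
`ω' J θ* = -i v* θ J θ* = -i v*`. -/

open Set Matrix

attribute [local instance] Matrix.normedAddCommGroup Matrix.normedSpace

namespace Matrix

variable {n : Type*} [Fintype n] [DecidableEq n]

theorem hasDerivWithinAt_mul {f g : ℝ → Matrix n n ℂ} {f' g' : Matrix n n ℂ} {s : Set ℝ}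
    {x : ℝ} (hf : HasDerivWithinAt f f' s x) (hg : HasDerivWithinAt g g' s x) :
    HasDerivWithinAt (fun y => f y * g y) (f x * g' + f' * g x) s x :=
  (LinearMap.mul ℝ (Matrix n n ℂ)).toContinuousBilinearMap.hasDerivWithinAt_of_bilinear hf hg

theorem hasDerivWithinAt_conjTranspose_mul_mul (j : Matrix n n ℂ) {u : ℝ → Matrix n n ℂ}
    {u' : Matrix n n ℂ} {s : Set ℝ} {x : ℝ} (hu : HasDerivWithinAt u u' s x) :
    HasDerivWithinAt (fun y => (u y)ᴴ * j * u y)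
      ((u x)ᴴ * (j * u') + u'ᴴ * (j * u x)) s x := by
  simpa only [star_eq_conjTranspose, mul_assoc, zero_mul, add_zero] using
    hasDerivWithinAt_mul hu.star (hasDerivWithinAt_mul (hasDerivWithinAt_const x s j) hu)

theorem conjTranspose_mul_add_conjTranspose_mul_eq_zero {j B U U' : Matrix n n ℂ}
    (hj : jᴴ = j) (hB : Bᴴ = B) (hU' : j * U' = Complex.I • (B * U)) :
    Uᴴ * (j * U') + U'ᴴ * (j * U) = 0 := by
  have hU'j : U'ᴴ * j = -Complex.I • (Uᴴ * B) := by
    rw [← hj, ← conjTranspose_mul, hU', conjTranspose_smul, conjTranspose_mul, hB]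
    simp
  rw [hU', ← mul_assoc U'ᴴ, hU'j, mul_smul_comm, smul_mul_assoc, mul_assoc, ← add_smul]
  simp

theorem conjTranspose_mul_mul_eq_of_hermitian_system {j : Matrix n n ℂ} (hj : jᴴ = j)
    {B u u' : ℝ → Matrix n n ℂ} {a b : ℝ} (hB : ∀ x ∈ Icc a b, (B x)ᴴ = B x)
    (hder : ∀ x ∈ Icc a b, HasDerivWithinAt u (u' x) (Icc a b) x)
    (heq : ∀ x ∈ Icc a b, j * u' x = Complex.I • (B x * u x)) :
    ∀ x ∈ Icc a b, (u x)ᴴ * j * u x = (u a)ᴴ * j * u a := by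
  have hderiv (x) (hx : x ∈ Icc a b) :
      HasDerivWithinAt (fun y => (u y)ᴴ * j * u y) 0 (Icc a b) x := by
    simpa only [conjTranspose_mul_add_conjTranspose_mul_eq_zero hj (hB x hx) (heq x hx)] using
      hasDerivWithinAt_conjTranspose_mul_mul j (hder x hx)
  exact constant_of_has_deriv_right_zero
    (fun x hx => (hderiv x hx).continuousWithinAt)
    (fun x hx => (hderiv x (Ico_subset_Icc_self hx)).mono_of_mem_nhdsWithin
      (Icc_mem_nhdsGE_of_mem hx))

theorem mul_mul_eq_of_mul_mul_eq {R : Type*} [CommRing R] {A A' j J : Matrix n n R}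
    (hj : j * j = 1) (hJ : J * J = 1) (h : A' * j * A = J) : A * J * A' = j := by
  have h1 : A' * (j * A * J) = 1 := by rw [← hJ, ← h]; simp only [mul_assoc]
  have h2 : j * (A * J * A') = 1 := by
    simpa only [mul_assoc] using mul_eq_one_comm.mp h1
  calc A * J * A' = j * j * (A * J * A') := by rw [hj, one_mul]
    _ = j := by rw [mul_assoc, h2, mul_one]

section Blocks

variable {m p k R : Type*}

theorem toBlocks₁₁_mul_mul_conjTranspose [Fintype k] [CommSemiring R] [StarRing R]
    (M : Matrix (m ⊕ p) k R) (J : Matrix k k R) :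
    (M * J * Mᴴ).toBlocks₁₁ = M.toRows₁ * J * (M.toRows₁)ᴴ := by
  ext a b
  simp [toBlocks₁₁, toRows₁, mul_apply]

theorem toRows₂_eq_of_smul_signature_mul_eq [Fintype m] [Fintype p] [DecidableEq m]
    [DecidableEq p] {V : Matrix m p ℂ} {U U' : Matrix (m ⊕ p) k ℂ}
    (h : (-Complex.I) • ((fromBlocks 1 0 0 (-1) : Matrix (m ⊕ p) (m ⊕ p) ℂ) * U') =
      fromBlocks 0 V Vᴴ 0 * U) :
    U'.toRows₂ = (-Complex.I) • (Vᴴ * U.toRows₁) := by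
  ext i c
  have h₂ := congrFun (congrFun h (Sum.inr i)) c
  simp only [smul_apply, mul_apply, Fintype.sum_sum_type, fromBlocks_apply₂₁, zero_apply,
    zero_mul, Finset.sum_const_zero, fromBlocks_apply₂₂, neg_apply, one_apply, neg_mul, ite_mul,
    one_mul, Finset.sum_neg_distrib, Finset.sum_ite_eq, Finset.mem_univ, ↓reduceIte, zero_add,
    smul_eq_mul, mul_neg, neg_neg, conjTranspose_apply, RCLike.star_def, add_zero, toRows₂,
    of_apply, toRows₁] at h₂ ⊢
  rw [← h₂, ← mul_assoc, Complex.I_mul_I]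
  ring

theorem rotation_mul_signature_mul_conjTranspose [Fintype m] [DecidableEq m] :
    ((Real.sqrt 2 : ℂ)⁻¹ • (fromBlocks 1 (-1) 1 1 : Matrix (m ⊕ m) (m ⊕ m) ℂ)) *
        (fromBlocks 1 0 0 (-1) : Matrix (m ⊕ m) (m ⊕ m) ℂ) *
        ((Real.sqrt 2 : ℂ)⁻¹ • (fromBlocks 1 (-1) 1 1 : Matrix (m ⊕ m) (m ⊕ m) ℂ))ᴴ =
      (fromBlocks 0 1 1 0 : Matrix (m ⊕ m) (m ⊕ m) ℂ) := by
  have hc : star (Real.sqrt 2 : ℂ)⁻¹ * (Real.sqrt 2 : ℂ)⁻¹ = 2⁻¹ := by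
    rw [Complex.star_def, map_inv₀, Complex.conj_ofReal, ← mul_inv, ← Complex.ofReal_mul,
      Real.mul_self_sqrt zero_le_two]
    norm_num
  simp only [conjTranspose_smul, smul_mul_assoc, mul_smul_comm, smul_smul,
    fromBlocks_conjTranspose, fromBlocks_multiply, hc]
  ext (i | i) (j | j) <;> simp [one_apply] <;> split_ifs <;> norm_num

end Blocks

end Matrix

theorem stmt_5_general {r : ℕ} {T : ℝ}
    (v : ℝ → Matrix (Fin r) (Fin r) ℂ)
    (jm Jm Q : Matrix (Fin r ⊕ Fin r) (Fin r ⊕ Fin r) ℂ)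
    (hj : jm = Matrix.fromBlocks (1 : Matrix (Fin r) (Fin r) ℂ) 0 0 (-1))
    (hJ : Jm = Matrix.fromBlocks (0 : Matrix (Fin r) (Fin r) ℂ) 1 1 0)
    (hQ : Q = ((Real.sqrt 2 : ℂ))⁻¹ • Matrix.fromBlocks 1 (-1) 1 1)
    (u u' : ℝ → Matrix (Fin r ⊕ Fin r) (Fin r ⊕ Fin r) ℂ)
    (hder : ∀ x ∈ Icc (0:ℝ) T, HasDerivWithinAt u (u' x) (Icc 0 T) x)
    (heq : ∀ x ∈ Icc (0:ℝ) T,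
      (-Complex.I) • (jm * u' x) = Matrix.fromBlocks 0 (v x) (v x)ᴴ 0 * u x)
    (hinit : u 0 = Qᴴ)
    (θ ω' : ℝ → Matrix (Fin r) (Fin r ⊕ Fin r) ℂ)
    (hθ : ∀ x : ℝ, θ x = (u x).submatrix Sum.inl id)
    (hω' : ∀ x : ℝ, ω' x = (u' x).submatrix Sum.inr id) :
    ∀ x ∈ Icc (0:ℝ) T, ω' x * Jm * (θ x)ᴴ = (-Complex.I) • (v x)ᴴ := by
  intro x hx
  have hjm : jmᴴ = jm := by simp [hj, fromBlocks_conjTranspose]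
  have hjj : jm * jm = 1 := by simp [hj, fromBlocks_multiply]
  have hJJ : Jm * Jm = 1 := by simp [hJ, fromBlocks_multiply]
  have hsystem (y) (hy : y ∈ Icc (0:ℝ) T) :
      jm * u' y = Complex.I • (fromBlocks 0 (v y) (v y)ᴴ 0 * u y) := by
    rw [← heq y hy, smul_smul, mul_neg, Complex.I_mul_I, neg_neg, one_smul]
  have hconserved : (u x)ᴴ * jm * u x = Jm := by
    rw [conjTranspose_mul_mul_eq_of_hermitian_system hjm
      (fun y _ => by simp [fromBlocks_conjTranspose]) hder hsystem x hx, hinit,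
      conjTranspose_conjTranspose, hQ, hj, hJ]
    exact rotation_mul_signature_mul_conjTranspose
  have hθx : θ x = (u x).toRows₁ := hθ x
  have hθJθ : θ x * Jm * (θ x)ᴴ = 1 := by
    have h := congrArg toBlocks₁₁ (mul_mul_eq_of_mul_mul_eq hjj hJJ hconserved)
    rwa [toBlocks₁₁_mul_mul_conjTranspose, hj, toBlocks_fromBlocks₁₁, ← hθx] at h
  have hω'θ : ω' x = (-Complex.I) • ((v x)ᴴ * θ x) := by
    rw [hω', hθx]
    exact toRows₂_eq_of_smul_signature_mul_eq (hj ▸ heq x hx)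
  rw [hω'θ, Matrix.smul_mul, Matrix.smul_mul, Matrix.mul_assoc, Matrix.mul_assoc,
    ← Matrix.mul_assoc (θ x), hθJθ, Matrix.mul_one]

theorem stmt_5 {r : ℕ} (hr : 0 < r) {T : ℝ} (hT : 0 < T)
    (v : ℝ → Matrix (Fin r) (Fin r) ℂ) (hv : ContinuousOn v (Icc 0 T))
    (jm Jm Q : Matrix (Fin r ⊕ Fin r) (Fin r ⊕ Fin r) ℂ)
    (hj : jm = Matrix.fromBlocks (1 : Matrix (Fin r) (Fin r) ℂ) 0 0 (-1))
    (hJ : Jm = Matrix.fromBlocks (0 : Matrix (Fin r) (Fin r) ℂ) 1 1 0)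
    (hQ : Q = ((Real.sqrt 2 : ℂ))⁻¹ • Matrix.fromBlocks 1 (-1) 1 1)
    (u u' : ℝ → Matrix (Fin r ⊕ Fin r) (Fin r ⊕ Fin r) ℂ)
    (hder : ∀ x ∈ Icc (0:ℝ) T, HasDerivWithinAt u (u' x) (Icc 0 T) x)
    (hcont : ContinuousOn u' (Icc 0 T))
    (heq : ∀ x ∈ Icc (0:ℝ) T,
      (-Complex.I) • (jm * u' x) = Matrix.fromBlocks 0 (v x) (v x)ᴴ 0 * u x)
    (hinit : u 0 = Qᴴ)
    (θ ω' : ℝ → Matrix (Fin r) (Fin r ⊕ Fin r) ℂ)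
    (hθ : ∀ x : ℝ, θ x = (u x).submatrix Sum.inl id)
    (hω' : ∀ x : ℝ, ω' x = (u' x).submatrix Sum.inr id) :
    ∀ x ∈ Icc (0:ℝ) T, ω' x * Jm * (θ x)ᴴ = (-Complex.I) • (v x)ᴴ :=
  stmt_5_general v jm Jm Q hj hJ hQ u u' hder heq hinit θ ω' hθ hω'
end
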